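/- arXiv:0907.3275 — 2 statements merged into one kernel-verified Lean document; each statement's English description precedes it below -/
import Mathlib

section
/- Let q > 0 and let f : ℝ → ℝ be weakly increasing (a < b implies f(a) ≤ f(b)). If P is a q-exchangeable Borel probability measure on ℝ^ℕ that is ergodic, then the pushforward of P under the coordinatewise map f^∞ : ℝ^ℕ → ℝ^ℕ, (w_1, w_2, ...) ↦ (f(w_1), f(w_2), ...), is q-exchangeable and ergodic. -/
/-!
Let `F = f^∞` and let `s` swap coordinates `i, i + 1`; `F` commutes with `s`. Evaluated at `A`,
the `s`-pushforward of `P.map F` is `∫_{F⁻¹ A} q ^ sgn (w_{i+1} - w_i) dP`, and we must replace the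
integrand by `q ^ sgn (f w_{i+1} - f w_i)`. For monotone `f` the two agree off
`D = {f w_i = f w_{i+1}}`, where the second is `1`. On `D` we use that `F⁻¹ A ∩ D` is
`s`-invariant: on an `s`-invariant set `E`, `q`-exchangeability gives
`∫_E q ^ sgn (w_{i+1} - w_i) dP = P (s⁻¹ E) = P E`.
Ergodicity passes to `P.map F` because `F` commutes with every permutation of coordinates.
-/

open MeasureTheory

/-- The map on sequences that swaps coordinates `i` and `i+1`. -/
def swapCoord {α : Type*} (i : ℕ) (w : ℕ → α) : ℕ → α :=
  fun j => if j = i then w (i + 1) else if j = i + 1 then w i else w j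

/-- A Borel probability measure `P` on `ℝ^ℕ` is `q`-exchangeable if for every `i` the
pushforward of `P` under the swap of coordinates `i` and `i+1` equals the measure with
density `w ↦ q ^ sgn (w (i+1) - w i)` with respect to `P`. -/
def IsQExchangeable (q : ℝ) (P : Measure (ℕ → ℝ)) : Prop :=
  ∀ i : ℕ, P.map (swapCoord i) =
    P.withDensity (fun w => ENNReal.ofReal (q ^ ((SignType.sign (w (i + 1) - w i)) : ℤ)))

/-- `P` is ergodic: every Borel set invariant under all permutations of finitely many
coordinates has measure `0` or `1`. -/
def IsErgodicExchangeable (P : Measure (ℕ → ℝ)) : Prop :=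
  ∀ S : Set (ℕ → ℝ), MeasurableSet S →
    (∀ σ : Equiv.Perm ℕ, {j | σ j ≠ j}.Finite → (fun w => w ∘ σ) ⁻¹' S = S) →
    P S = 0 ∨ P S = 1

section swapCoord

variable {α β : Type*}

lemma measurable_swapCoord [MeasurableSpace α] (i : ℕ) :
    Measurable (swapCoord (α := α) i) := by
  refine measurable_pi_lambda _ fun j => ?_
  unfold swapCoord
  split_ifs <;> exact measurable_pi_apply _

@[simp]
lemma swapCoord_apply_self (i : ℕ) (w : ℕ → α) : swapCoord i w i = w (i + 1) := by
  simp [swapCoord]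

@[simp]
lemma swapCoord_apply_succ (i : ℕ) (w : ℕ → α) : swapCoord i w (i + 1) = w i := by
  simp [swapCoord]

lemma swapCoord_eq_self {i : ℕ} {w : ℕ → α} (h : w i = w (i + 1)) : swapCoord i w = w := by
  funext j
  unfold swapCoord
  split_ifs <;> simp_all

lemma comp_swapCoord (f : α → β) (i : ℕ) (w : ℕ → α) :
    f ∘ swapCoord i w = swapCoord i (f ∘ w) := by
  funext j
  simp only [swapCoord, Function.comp_apply, apply_ite f]

lemma preimage_swapCoord_comp_inter_eq (f : α → β) (i : ℕ) (A : Set (ℕ → β)) :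
    swapCoord i ⁻¹' ((fun w => f ∘ w) ⁻¹' A ∩ {w | f (w i) = f (w (i + 1))}) =
      (fun w => f ∘ w) ⁻¹' A ∩ {w | f (w i) = f (w (i + 1))} := by
  ext w
  simp only [Set.mem_preimage, Set.mem_inter_iff, Set.mem_ofPred_eq, swapCoord_apply_self,
    swapCoord_apply_succ, comp_swapCoord]
  constructor
  · rintro ⟨hA, hfw⟩
    exact ⟨by rwa [swapCoord_eq_self (w := f ∘ w) hfw.symm] at hA, hfw.symm⟩
  · rintro ⟨hA, hfw⟩
    exact ⟨by rwa [swapCoord_eq_self (w := f ∘ w) hfw], hfw.symm⟩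

end swapCoord

lemma monotone_signType_cast : Monotone (fun s : SignType => (s : ℤ)) := by
  intro a b h
  decide +revert

lemma measurable_qDensity (q : ℝ) (i : ℕ) :
    Measurable fun w : ℕ → ℝ =>
      ENNReal.ofReal (q ^ ((SignType.sign (w (i + 1) - w i)) : ℤ)) :=
  (measurable_of_countable fun n : ℤ => ENNReal.ofReal (q ^ n)).comp
    ((monotone_signType_cast.comp SignType.sign.monotone).measurable.comp (by fun_prop))

lemma Monotone.sign_sub_eq_of_ne {α β : Type*} [AddCommGroup α] [LinearOrder α]
    [IsOrderedAddMonoid α] [AddCommGroup β] [LinearOrder β] [IsOrderedAddMonoid β] {f : α → β}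
    (hf : Monotone f) {a b : α} (h : f a ≠ f b) :
    SignType.sign (f b - f a) = SignType.sign (b - a) := by
  rcases lt_trichotomy a b with hab | rfl | hab
  · rw [sign_pos (sub_pos.2 hab), sign_pos (sub_pos.2 ((hf hab.le).lt_of_ne h))]
  · exact absurd rfl h
  · rw [sign_neg (sub_neg.2 hab), sign_neg (sub_neg.2 ((hf hab.le).lt_of_ne h.symm))]

namespace IsQExchangeable

variable {q : ℝ} {P : Measure (ℕ → ℝ)}

lemma setLIntegral_qDensity_of_preimage_swapCoord_eq (hP : IsQExchangeable q P) {i : ℕ}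
    {E : Set (ℕ → ℝ)} (hE : MeasurableSet E) (hinv : swapCoord i ⁻¹' E = E) :
    ∫⁻ w in E, ENNReal.ofReal (q ^ ((SignType.sign (w (i + 1) - w i)) : ℤ)) ∂P = P E := by
  rw [← withDensity_apply _ hE, ← hP i, Measure.map_apply (measurable_swapCoord i) hE, hinv]

lemma setLIntegral_qDensity_comp (hP : IsQExchangeable q P) {f : ℝ → ℝ} (hf : Monotone f)
    (i : ℕ) {A : Set (ℕ → ℝ)} (hA : MeasurableSet A) :
    ∫⁻ w in (fun w => f ∘ w) ⁻¹' A,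
        ENNReal.ofReal (q ^ ((SignType.sign (w (i + 1) - w i)) : ℤ)) ∂P =
      ∫⁻ w in (fun w => f ∘ w) ⁻¹' A,
        ENNReal.ofReal (q ^ ((SignType.sign (f (w (i + 1)) - f (w i))) : ℤ)) ∂P := by
  have hfm := hf.measurable
  have hF : Measurable fun w : ℕ → ℝ => f ∘ w := by fun_prop
  set D : Set (ℕ → ℝ) := {w | f (w i) = f (w (i + 1))}
  have hD : MeasurableSet D :=
    measurableSet_eq_fun (hfm.comp (measurable_pi_apply i)) (hfm.comp (measurable_pi_apply _))
  rw [← lintegral_inter_add_sdiff _ _ hD]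
  conv_rhs => rw [← lintegral_inter_add_sdiff _ _ hD]
  congr 1
  · rw [hP.setLIntegral_qDensity_of_preimage_swapCoord_eq ((hF hA).inter hD)
      (preimage_swapCoord_comp_inter_eq f i A),
      setLIntegral_congr_fun ((hF hA).inter hD) (g := fun _ => 1) fun w hw => by
        simp [show f (w (i + 1)) = f (w i) from hw.2.symm],
      setLIntegral_one]
  · refine setLIntegral_congr_fun ((hF hA).diff hD) fun w hw => ?_
    rw [hf.sign_sub_eq_of_ne hw.2]

lemma map_comp (hP : IsQExchangeable q P) {f : ℝ → ℝ} (hf : Monotone f) :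
    IsQExchangeable q (P.map fun w => f ∘ w) := by
  have hfm := hf.measurable
  have hF : Measurable fun w : ℕ → ℝ => f ∘ w := by fun_prop
  intro i
  ext A hA
  rw [Measure.map_apply (measurable_swapCoord i) hA,
    Measure.map_apply hF (measurable_swapCoord i hA), withDensity_apply _ hA,
    setLIntegral_map hA (measurable_qDensity q i) hF]
  simp only [Function.comp_apply]
  rw [← hP.setLIntegral_qDensity_comp hf i hA, ← withDensity_apply _ (hF hA), ← hP i,
    Measure.map_apply (measurable_swapCoord i) (hF hA)]
  congr 1
  ext w
  simp only [Set.mem_preimage, comp_swapCoord]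

end IsQExchangeable

lemma IsErgodicExchangeable.map_comp {P : Measure (ℕ → ℝ)} (hP : IsErgodicExchangeable P)
    {f : ℝ → ℝ} (hf : Measurable f) : IsErgodicExchangeable (P.map fun w => f ∘ w) := by
  have hF : Measurable fun w : ℕ → ℝ => f ∘ w := by fun_prop
  intro S hS hinv
  rw [Measure.map_apply hF hS]
  exact hP _ (hF hS) fun σ hσ => congrArg ((fun w => f ∘ w) ⁻¹' ·) (hinv σ hσ)

theorem stmt_4_general (q : ℝ) (f : ℝ → ℝ) (hf : ∀ a b : ℝ, a < b → f a ≤ f b)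
    (P : Measure (ℕ → ℝ))
    (hP : IsQExchangeable q P) (hPerg : IsErgodicExchangeable P) :
    IsQExchangeable q (P.map (fun w => f ∘ w)) ∧
      IsErgodicExchangeable (P.map (fun w => f ∘ w)) := by
  have hmono : Monotone f := monotone_iff_forall_lt.2 fun a b => hf a b
  exact ⟨hP.map_comp hmono, hPerg.map_comp hmono.measurable⟩

/-- the coordinatewise application of a weakly increasing `f : ℝ → ℝ` maps an
ergodic `q`-exchangeable measure to an ergodic `q`-exchangeable measure. -/
theorem stmt_4 (q : ℝ) (hq : 0 < q) (f : ℝ → ℝ) (hf : ∀ a b : ℝ, a < b → f a ≤ f b)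
    (P : Measure (ℕ → ℝ)) [IsProbabilityMeasure P]
    (hP : IsQExchangeable q P) (hPerg : IsErgodicExchangeable P) :
    IsQExchangeable q (P.map (fun w => f ∘ w)) ∧
      IsErgodicExchangeable (P.map (fun w => f ∘ w)) :=
  stmt_4_general q f hf P hP hPerg
end

section
/- The law of the random bijection σ driving the infinite q-shuffle (the Mallows measure Q on the group of all bijections of ℕ) is invariant under group inversion: for every n ≥ 1 and every injective map f : {1, ..., n} → ℕ, P(σ(j) = f(j) for all j ∈ {1, ..., n}) = P(σ(f(j)) = j for all j ∈ {1, ..., n}). -/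
open MeasureTheory ProbabilityTheory

/-- The first `j` values `σ(0), …, σ(j-1)` of the infinite `q`-shuffle permutation driven by
the (0-indexed) geometric choices `x`. -/
noncomputable def shufflePrefix (x : ℕ → ℕ) : ℕ → List ℕ
  | 0 => []
  | j + 1 => shufflePrefix x j ++ [Nat.nth (fun m => m ∉ shufflePrefix x j) (x j)]

/-- The random injection `σ : ℕ → ℕ` driving the infinite `q`-shuffle: `σ(j)` is the
`x j`-th smallest (0-indexed) natural number not in `{σ(0), …, σ(j-1)}`. -/
noncomputable def shuffleSeq (x : ℕ → ℕ) (j : ℕ) : ℕ :=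
  Nat.nth (fun m => m ∉ shufflePrefix x j) (x j)

open Finset

/-!
Both events are cylinder events for the independent choices `ξ`. The event `σ(j) = f(j)` for
`j < n` pins `ξ_j` to the number `c_j` (`shuffleCode`) of values below `f(j)` not taken by `f` on
`[0, j)`. The event `σ(f(j)) = j` pins `ξ_{f(j)}` to the number `a_j` (`invCount`) of `i < j`
with `f(i) > f(j)`, and forces every other `ξ_k` with `k < N` (`N` beyond the range of `f`) to
skip the `r_k = #{j | f(j) > k}` (`pendingCount`) values below `n` still free at time `k`, an
event of probability `q^{r_k}`. Hence both probabilities have the form `(1-q)^n q^e`, and the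
exponents agree: `c_j` is the number of values below `f(j)` outside the range of `f` plus the
number of `i > j` with `f(i) < f(j)`, and summing over `j` gives `∑ r_k + ∑ a_j`.
-/

lemma List.setOf_notMem_infinite (L : List ℕ) : {m | m ∉ L}.Infinite := by
  simpa only [Set.compl_ofPred] using L.finite_toSet.infinite_compl

theorem forall_iff_forall_of_step {α : Type*} [LT α] [WellFoundedLT α] {p q : α → Prop}
    (h : ∀ k, (∀ i < k, p i) → (p k ↔ q k)) : (∀ k, p k) ↔ ∀ k, q k := by
  refine ⟨fun hp k => (h k fun i _ => hp i).1 (hp k), fun hq k => ?_⟩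
  induction k using WellFoundedLT.induction with
  | _ k ih => exact (h k ih).2 (hq k)

lemma Fin.card_filter_range_val {n : ℕ} (j : Fin n) (p : ℕ → Prop) [DecidablePred p] :
    #{v ∈ range j | p v} = #((Iio j).filter fun i : Fin n => p i) := by
  rw [← Nat.Iio_eq_range, ← Fin.map_valEmbedding_Iio, filter_map, card_map]
  rfl

lemma Fin.card_filter_range (n : ℕ) (p : ℕ → Prop) [DecidablePred p] :
    #{v ∈ range n | p v} = #{i : Fin n | p i} := by
  rw [← Nat.Iio_eq_range, ← Fin.map_valEmbedding_univ, filter_map, card_map]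
  rfl

lemma ProbabilityTheory.iIndepFun.measure_forall_mem {Ω ι : Type*} [MeasurableSpace Ω]
    {P : Measure Ω} {ξ : ι → Ω → ℕ} (hindep : iIndepFun ξ P) (S : Finset ι) (T : ι → Set ℕ) :
    P {ω | ∀ k ∈ S, ξ k ω ∈ T k} = ∏ k ∈ S, P (ξ k ⁻¹' T k) := by
  rw [← hindep.measure_inter_preimage_eq_mul S fun _ _ => MeasurableSet.of_discrete]
  congr 1
  ext ω
  simp

section Geometric

variable {Ω : Type*} [MeasurableSpace Ω] {P : Measure Ω} {q : ℝ} {η : Ω → ℕ}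

lemma ofReal_geometric_weight (hq0 : 0 ≤ q) (hq1 : q ≤ 1) (i : ℕ) :
    ENNReal.ofReal ((1 - q) * q ^ i) = ENNReal.ofReal (1 - q) * ENNReal.ofReal q ^ i := by
  rw [ENNReal.ofReal_mul (by linarith), ENNReal.ofReal_pow hq0]

lemma measure_le_of_geometric [IsProbabilityMeasure P] (hη : Measurable η) (hq0 : 0 ≤ q)
    (hq1 : q ≤ 1) (hgeom : ∀ i, P {ω | η ω = i} = ENNReal.ofReal ((1 - q) * q ^ i)) (r : ℕ) :
    P {ω | r ≤ η ω} = ENNReal.ofReal q ^ r := by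
  have hrange : ∀ g : ℕ → ℕ, g.Injective →
      P (η ⁻¹' Set.range g) = ∑' i, ENNReal.ofReal (1 - q) * ENNReal.ofReal q ^ g i := by
    intro g hg
    rw [← tsum_measure_preimage_singleton (Set.countable_range g)
      fun _ _ => hη (measurableSet_singleton _), tsum_range (fun v => P (η ⁻¹' {v})) hg]
    exact tsum_congr fun i => (hgeom (g i)).trans (ofReal_geometric_weight hq0 hq1 _)
  have htotal := hrange id Function.injective_id
  rw [Set.range_id, Set.preimage_univ, measure_univ] at htotal
  simp only [id] at htotal
  have htail : {ω | r ≤ η ω} = η ⁻¹' Set.range (r + ·) := by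
    ext ω
    simp only [Set.mem_ofPred_eq, Set.mem_preimage, Set.mem_range]
    exact ⟨fun h => ⟨η ω - r, by omega⟩, fun ⟨i, hi⟩ => hi ▸ Nat.le_add_right r i⟩
  rw [htail, hrange _ (add_right_injective r)]
  simp_rw [pow_add, mul_left_comm _ (ENNReal.ofReal q ^ r)]
  rw [ENNReal.tsum_mul_left, ← htotal, mul_one]

end Geometric

section Shuffle

variable (x : ℕ → ℕ)

lemma shufflePrefix_succ (k : ℕ) :
    shufflePrefix x (k + 1) = shufflePrefix x k ++ [shuffleSeq x k] := rfl

lemma mem_shufflePrefix {k m : ℕ} : m ∈ shufflePrefix x k ↔ ∃ i < k, shuffleSeq x i = m := by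
  induction k with
  | zero => simp [shufflePrefix]
  | succ k ih =>
    simp only [shufflePrefix_succ, List.mem_append, List.mem_singleton, ih,
      Nat.lt_succ_iff_lt_or_eq]
    grind

lemma shuffleSeq_notMem_shufflePrefix (k : ℕ) : shuffleSeq x k ∉ shufflePrefix x k :=
  Nat.nth_mem_of_infinite (List.setOf_notMem_infinite _) (x k)

lemma shuffleSeq_injective : Function.Injective (shuffleSeq x) := by
  intro i j hij
  by_contra hne
  rcases Nat.lt_or_gt_of_ne hne with h | h
  · exact shuffleSeq_notMem_shufflePrefix x j ((mem_shufflePrefix x).2 ⟨i, h, hij⟩)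
  · exact shuffleSeq_notMem_shufflePrefix x i ((mem_shufflePrefix x).2 ⟨j, h, hij.symm⟩)

lemma shuffleSeq_eq_iff {k m : ℕ} :
    shuffleSeq x k = m ↔
      m ∉ shufflePrefix x k ∧ x k = #{v ∈ range m | v ∉ shufflePrefix x k} := by
  rw [← Nat.count_eq_card_filter_range]
  constructor
  · rintro rfl
    exact ⟨shuffleSeq_notMem_shufflePrefix x k,
      (Nat.count_nth_of_infinite (List.setOf_notMem_infinite _) _).symm⟩
  · rintro ⟨hm, hx⟩
    rw [shuffleSeq, hx]
    exact Nat.nth_count hm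

lemma le_shuffleSeq_iff {k m : ℕ} :
    m ≤ shuffleSeq x k ↔ #{v ∈ range m | v ∉ shufflePrefix x k} ≤ x k := by
  rw [← Nat.count_eq_card_filter_range]
  exact (Nat.count_le_iff_le_nth (List.setOf_notMem_infinite _)).symm

end Shuffle

section Injection

variable {n : ℕ} (f : Fin n → ℕ)

def shuffleCode (j : Fin n) : ℕ := #{m ∈ range (f j) | m ∉ (Iio j).image f}

def invCount (j : Fin n) : ℕ := #{i ∈ Iio j | f j < f i}

def pendingCount (k : ℕ) : ℕ := #{j | k < f j}

variable {f}

lemma shuffleCode_eq (hf : Function.Injective f) (j : Fin n) :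
    shuffleCode f j = #{m ∈ range (f j) | m ∉ univ.image f} + #{i ∈ Ioi j | f i < f j} := by
  rw [shuffleCode, ← card_filter_add_card_filter_not (fun m => m ∉ univ.image f), filter_filter,
    filter_filter]
  congr 1
  · refine congrArg card (filter_congr fun m _ => ?_)
    have : (Iio j).image f ⊆ univ.image f := image_subset_image (subset_univ _)
    exact ⟨fun h => h.2, fun h => ⟨fun h' => h (this h'), h⟩⟩
  · rw [← card_image_of_injective _ hf]
    congr 1
    ext m
    simp only [mem_filter, mem_range, mem_image, mem_Iio, mem_Ioi, mem_univ, true_and, not_not]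
    constructor
    · rintro ⟨hm, hnot, i, rfl⟩
      refine ⟨i, ⟨lt_of_le_of_ne (not_lt.1 fun h => hnot ⟨i, h, rfl⟩) ?_, hm⟩, rfl⟩
      rintro rfl
      exact lt_irrefl _ hm
    · rintro ⟨i, ⟨hji, hm⟩, rfl⟩
      exact ⟨hm, fun ⟨i', hi', he⟩ => (hf he ▸ hi').asymm hji, i, rfl⟩

lemma sum_pendingCount {N : ℕ} (hN : ∀ j, f j < N) :
    ∑ k ∈ range N \ univ.image f, pendingCount f k =
      ∑ j, #{m ∈ range (f j) | m ∉ univ.image f} := by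
  simp only [pendingCount, card_eq_sum_ones]
  refine sum_comm' fun k j => ?_
  simp only [mem_sdiff, mem_range, mem_filter, mem_univ, true_and]
  have := hN j
  constructor
  · rintro ⟨⟨_, hk⟩, hkj⟩; exact ⟨⟨hkj, hk⟩, trivial⟩
  · rintro ⟨⟨hkj, hk⟩, -⟩; exact ⟨⟨by omega, hk⟩, hkj⟩

lemma sum_invCount :
    ∑ j, #{i ∈ Ioi j | f i < f j} = ∑ j, invCount f j := by
  simp only [invCount, card_eq_sum_ones, sum_filter]
  refine sum_comm' fun j i => ?_
  simp

lemma sum_shuffleCode (hf : Function.Injective f) {N : ℕ} (hN : ∀ j, f j < N) :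
    ∑ j, shuffleCode f j =
      ∑ j, invCount f j + ∑ k ∈ range N \ univ.image f, pendingCount f k := by
  simp only [shuffleCode_eq hf, sum_add_distrib, sum_pendingCount hN, sum_invCount, add_comm]

end Injection

section Events

variable {n : ℕ} {f : Fin n → ℕ} (x : ℕ → ℕ)

lemma mem_shufflePrefix_iff_mem_image {j : Fin n} (h : ∀ i < j, shuffleSeq x i = f i) {m : ℕ} :
    m ∈ shufflePrefix x j ↔ m ∈ (Iio j).image f := by
  simp only [mem_shufflePrefix, mem_image, mem_Iio]
  constructor
  · rintro ⟨i, hi, rfl⟩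
    exact ⟨⟨i, hi.trans j.2⟩, hi, (h ⟨i, hi.trans j.2⟩ hi).symm⟩
  · rintro ⟨i, hi, rfl⟩
    exact ⟨i, hi, h i hi⟩

lemma forall_shuffleSeq_eq_iff (hf : Function.Injective f) :
    (∀ j : Fin n, shuffleSeq x j = f j) ↔ ∀ j : Fin n, x j = shuffleCode f j := by
  refine forall_iff_forall_of_step fun j h => ?_
  have hmem := fun m => mem_shufflePrefix_iff_mem_image x h (m := m)
  have hfj : f j ∉ (Iio j).image f := by
    simp only [mem_image, mem_Iio, not_exists, not_and]
    exact fun i hi he => hi.ne (hf he)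
  rw [shuffleSeq_eq_iff, hmem, shuffleCode]
  simp only [hmem, hfj, not_false_eq_true, true_and]

end Events

section Inverse

variable {n : ℕ} (f : Fin n → ℕ)

/-- The values of the choice `x k` compatible with `σ(f j) = j` for all `j`: position `k = f j`
must pick `j`, a position outside the range of `f` must avoid every `j < n`. -/
def inverseCodeSet (k : ℕ) : Set ℕ :=
  {v | (∀ j, f j = k → v = invCount f j) ∧ ((∀ j, f j ≠ k) → pendingCount f k ≤ v)}

variable {f}

lemma inverseCodeSet_apply (hf : Function.Injective f) (j : Fin n) :
    inverseCodeSet f (f j) = {invCount f j} := by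
  ext v
  simp only [inverseCodeSet, Set.mem_ofPred_eq, Set.mem_singleton_iff]
  exact ⟨fun h => h.1 j rfl, fun h => ⟨fun i hi => hf hi ▸ h, fun hne => absurd rfl (hne j)⟩⟩

lemma inverseCodeSet_of_forall_ne {k : ℕ} (hk : ∀ j, f j ≠ k) :
    inverseCodeSet f k = Set.Ici (pendingCount f k) := by
  ext v
  simp only [inverseCodeSet, Set.mem_ofPred_eq, Set.mem_Ici]
  exact ⟨fun h => h.2 hk, fun h => ⟨fun j hj => absurd hj (hk j), fun _ => h⟩⟩

variable (x : ℕ → ℕ)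

lemma val_mem_shufflePrefix_iff {k : ℕ}
    (h : ∀ i < k, ∀ j : Fin n, shuffleSeq x i = j ↔ f j = i) (j : Fin n) :
    (j : ℕ) ∈ shufflePrefix x k ↔ f j < k := by
  rw [mem_shufflePrefix]
  constructor
  · rintro ⟨i, hi, hσ⟩
    exact (h i hi j).1 hσ ▸ hi
  · intro hj
    exact ⟨f j, hj, (h _ hj j).2 rfl⟩

lemma shuffleSeq_eq_iff_mem_inverseCodeSet (hf : Function.Injective f) {k : ℕ}
    (h : ∀ i < k, ∀ j : Fin n, shuffleSeq x i = j ↔ f j = i) :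
    (∀ j : Fin n, shuffleSeq x k = j ↔ f j = k) ↔ x k ∈ inverseCodeSet f k := by
  have hmem := val_mem_shufflePrefix_iff x h
  by_cases hk : ∃ j₀, f j₀ = k
  · obtain ⟨j₀, rfl⟩ := hk
    have hcount : #{v ∈ range j₀ | v ∉ shufflePrefix x (f j₀)} = invCount f j₀ := by
      rw [Fin.card_filter_range_val, invCount]
      congr 1
      refine filter_congr fun i hi => ?_
      rw [hmem, not_lt, le_iff_lt_or_eq, hf.eq_iff, or_iff_left (mem_Iio.1 hi).ne']
    have hj₀ : (j₀ : ℕ) ∉ shufflePrefix x (f j₀) := by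
      rw [hmem]
      exact lt_irrefl _
    calc (∀ j : Fin n, shuffleSeq x (f j₀) = j ↔ f j = f j₀)
        ↔ shuffleSeq x (f j₀) = j₀ := by
          simp only [hf.eq_iff]
          exact ⟨fun h => (h j₀).2 rfl, fun h j => by rw [h, Fin.val_inj, eq_comm]⟩
      _ ↔ x (f j₀) ∈ inverseCodeSet f (f j₀) := by
          rw [shuffleSeq_eq_iff, inverseCodeSet_apply hf, Set.mem_singleton_iff, hcount]
          exact and_iff_right hj₀
  · push Not at hk
    have hcount : #{v ∈ range n | v ∉ shufflePrefix x k} = pendingCount f k := by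
      rw [Fin.card_filter_range, pendingCount]
      congr 1
      refine filter_congr fun j _ => ?_
      rw [hmem, not_lt, le_iff_lt_or_eq, or_iff_left (hk j).symm]
    calc (∀ j : Fin n, shuffleSeq x k = j ↔ f j = k)
        ↔ n ≤ shuffleSeq x k := by
          simp only [hk, iff_false]
          exact ⟨fun h => not_lt.1 fun hlt => h ⟨_, hlt⟩ rfl, fun h j hj => (hj ▸ j.2).not_ge h⟩
      _ ↔ x k ∈ inverseCodeSet f k := by
          rw [le_shuffleSeq_iff, hcount, inverseCodeSet_of_forall_ne hk, Set.mem_Ici]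

lemma mem_inverseCodeSet_of_le {N : ℕ} (hN : ∀ j, f j < N) {k : ℕ} (hk : N ≤ k) (v : ℕ) :
    v ∈ inverseCodeSet f k := by
  have hne : ∀ j, f j ≠ k := fun j => ((hN j).trans_le hk).ne
  have hzero : pendingCount f k = 0 :=
    card_eq_zero.2 (filter_false_of_mem fun j _ => ((hN j).trans_le hk).not_gt)
  rw [inverseCodeSet_of_forall_ne hne, hzero]
  exact Nat.zero_le v

lemma forall_shuffleSeq_apply_eq_iff (hf : Function.Injective f) {N : ℕ} (hN : ∀ j, f j < N) :
    (∀ j : Fin n, shuffleSeq x (f j) = j) ↔ ∀ k ∈ range N, x k ∈ inverseCodeSet f k :=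
  calc (∀ j : Fin n, shuffleSeq x (f j) = j)
      ↔ ∀ k, ∀ j : Fin n, shuffleSeq x k = j ↔ f j = k :=
        ⟨fun h k j => ⟨fun hk => shuffleSeq_injective x ((h j).trans hk.symm),
          fun hj => hj ▸ h j⟩, fun h j => (h (f j) j).2 rfl⟩
    _ ↔ ∀ k, x k ∈ inverseCodeSet f k :=
        forall_iff_forall_of_step fun _ h => shuffleSeq_eq_iff_mem_inverseCodeSet x hf h
    _ ↔ ∀ k ∈ range N, x k ∈ inverseCodeSet f k := by
        refine ⟨fun h k _ => h k, fun h k => ?_⟩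
        by_cases hk : k < N
        · exact h k (mem_range.2 hk)
        · exact mem_inverseCodeSet_of_le hN (not_lt.1 hk) _

end Inverse

lemma prod_measure_preimage_inverseCodeSet {Ω : Type*} [MeasurableSpace Ω] {P : Measure Ω}
    [IsProbabilityMeasure P] {q : ℝ} (hq0 : 0 ≤ q) (hq1 : q ≤ 1) {ξ : ℕ → Ω → ℕ}
    (hmeas : ∀ k, Measurable (ξ k))
    (hgeom : ∀ k i, P {ω | ξ k ω = i} = ENNReal.ofReal ((1 - q) * q ^ i))
    {n N : ℕ} {f : Fin n → ℕ} (hf : Function.Injective f) (hN : ∀ j, f j < N) :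
    ∏ k ∈ range N, P (ξ k ⁻¹' inverseCodeSet f k) =
      ENNReal.ofReal (1 - q) ^ n * ENNReal.ofReal q ^
        (∑ j, invCount f j + ∑ k ∈ range N \ univ.image f, pendingCount f k) := by
  have himage : univ.image f ⊆ range N := fun k hk => by
    obtain ⟨j, -, rfl⟩ := mem_image.1 hk
    exact mem_range.2 (hN j)
  rw [← prod_sdiff himage, prod_image fun _ _ _ _ h => hf h, mul_comm, pow_add, ← mul_assoc]
  congr 1
  · simp only [inverseCodeSet_apply hf, Set.preimage, Set.mem_singleton_iff, hgeom,
      ofReal_geometric_weight hq0 hq1, prod_mul_distrib, prod_const, card_univ, Fintype.card_fin,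
      prod_pow_eq_pow_sum]
  · rw [← prod_pow_eq_pow_sum]
    refine prod_congr rfl fun k hk => ?_
    have hk : ∀ j, f j ≠ k := fun j hj => (mem_sdiff.1 hk).2 (hj ▸ mem_image_of_mem f (mem_univ j))
    rw [inverseCodeSet_of_forall_ne hk]
    exact measure_le_of_geometric (hmeas k) hq0 hq1 (hgeom k) _

theorem stmt_16_general (q : ℝ) (hq0 : 0 < q) (hq1 : q < 1)
    (Ω : Type*) [MeasurableSpace Ω] (P : Measure Ω) [IsProbabilityMeasure P]
    (ξ : ℕ → Ω → ℕ) (hmeas : ∀ j, Measurable (ξ j))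
    (hindep : iIndepFun ξ P)
    (hgeom : ∀ j i : ℕ, P {ω | ξ j ω = i} = ENNReal.ofReal ((1 - q) * q ^ i))
    (n : ℕ) (f : Fin n → ℕ) (hf : Function.Injective f) :
    P {ω | ∀ j : Fin n, shuffleSeq (fun t => ξ t ω) (j : ℕ) = f j} =
      P {ω | ∀ j : Fin n, shuffleSeq (fun t => ξ t ω) (f j) = (j : ℕ)} := by
  set N := univ.sup f + 1
  have hN : ∀ j, f j < N := fun j => Nat.lt_succ_of_le (le_sup (mem_univ j))
  have hA : {ω | ∀ j : Fin n, shuffleSeq (fun t => ξ t ω) j = f j} =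
      {ω | ∀ j ∈ univ, ξ j ω ∈ ({shuffleCode f j} : Set ℕ)} := by
    ext ω
    simp [forall_shuffleSeq_eq_iff _ hf]
  have hB : {ω | ∀ j : Fin n, shuffleSeq (fun t => ξ t ω) (f j) = j} =
      {ω | ∀ k ∈ range N, ξ k ω ∈ inverseCodeSet f k} := by
    ext ω
    exact forall_shuffleSeq_apply_eq_iff _ hf hN
  rw [hA, hB, (hindep.precomp Fin.val_injective).measure_forall_mem, hindep.measure_forall_mem,
    prod_measure_preimage_inverseCodeSet hq0.le hq1.le hmeas hgeom hf hN, ← sum_shuffleCode hf hN]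
  simp only [Set.preimage, Set.mem_singleton_iff, hgeom, ofReal_geometric_weight hq0.le hq1.le,
    prod_mul_distrib, prod_const, card_univ, Fintype.card_fin, prod_pow_eq_pow_sum]

/-- the Mallows measure (the law of the random bijection `σ` of `ℕ` driving
the infinite `q`-shuffle) is invariant under group inversion: for every `n ≥ 1` and every
injective `f : {0, …, n-1} → ℕ`,
`P(σ(j) = f(j) ∀ j < n) = P(σ(f(j)) = j ∀ j < n)`.  Here `ξ_0, ξ_1, …` are independent with
the (0-indexed) geometric law `P(ξ = i) = (1-q) q^i`. -/
theorem stmt_16 (q : ℝ) (hq0 : 0 < q) (hq1 : q < 1)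
    (Ω : Type*) [MeasurableSpace Ω] (P : Measure Ω) [IsProbabilityMeasure P]
    (ξ : ℕ → Ω → ℕ) (hmeas : ∀ j, Measurable (ξ j))
    (hindep : iIndepFun ξ P)
    (hgeom : ∀ j i : ℕ, P {ω | ξ j ω = i} = ENNReal.ofReal ((1 - q) * q ^ i))
    (n : ℕ) (hn : 1 ≤ n) (f : Fin n → ℕ) (hf : Function.Injective f) :
    P {ω | ∀ j : Fin n, shuffleSeq (fun t => ξ t ω) (j : ℕ) = f j} =
      P {ω | ∀ j : Fin n, shuffleSeq (fun t => ξ t ω) (f j) = (j : ℕ)} :=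
  stmt_16_general q hq0 hq1 Ω P ξ hmeas hindep hgeom n f hf
end
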